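/- Let λ ∈ (−1/2, ∞)^n. Define Ξ_λ(x,z,t) = Π_{j=1}^n (x_j+z_j)^{2λ_j} / V_{√t}^{λ_j,+}(x_j) for x ∈ (0,∞)^n, z ∈ ℝ^n with x+z ∈ (0,∞)^n, and t > 0, where V_s^{λ_j,+}(x_j) is the w_{λ_j}^+-measure of (x_j−s, x_j+s) ∩ (0,∞). Then ∫_{|z|<√t} Ξ_λ(x,z,t)·χ_{{x+z ∈ (0,∞)^n}} dz ≃ 1 uniformly in x ∈ (0,∞)^n and t > 0; i.e., there are constants c, C > 0 depending only on λ and n such that c ≤ ∫_{|z|<√t} Ξ_λ(x,z,t) χ_{{x+z∈(0,∞)^n}} dz ≤ C. -/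

import Mathlib

open MeasureTheory
open scoped BigOperators

/-- `V_s^{λ,+}(x)`, the `w_λ^+` measure of `(x-s,x+s) ∩ (0,∞)`. -/
noncomputable def Vplus (l x s : ℝ) : ℝ :=
  ∫ u in Set.Ioo (x - s) (x + s) ∩ Set.Ioi (0 : ℝ), u ^ (2 * l)

/-- `Ξ_λ(x,z,t) = ∏_j (x_j+z_j)^{2λ_j} / V_{√t}^{λ_j,+}(x_j)`. -/
noncomputable def Xi {n : ℕ} (l : Fin n → ℝ) (x z : EuclideanSpace ℝ (Fin n)) (t : ℝ) : ℝ :=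
  ∏ j, (x j + z j) ^ (2 * l j) / Vplus (l j) (x j) (Real.sqrt t)

/-!
On `{x + z ∈ (0, ∞)ⁿ}` the integrand splits as `∏ⱼ w⁺(xⱼ + zⱼ) / V_{√t}(xⱼ)`, where `w⁺` is the
density of `w_{λⱼ}^+` extended by zero. The ball of radius `√t` lies in the cube `(-√t, √t)ⁿ`,
over which the integral factorises into `∏ⱼ V_{√t}(xⱼ) / V_{√t}(xⱼ) = 1`, and contains the cube of
half-side `√t / √(n + 1)`, over which it is `∏ⱼ V_{√t/√(n+1)}(xⱼ) / V_{√t}(xⱼ)`. This is bounded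
below by the doubling property of `w_λ^+`, which comes from the two-sided estimate
`V_s^{λ,+}(x) ≃ s (x + s)^{2λ}`.
-/

open Set Real

lemma rpow_le_rpow_abs_mul_rpow {k u v : ℝ} (a : ℝ) (hk : 1 ≤ k) (hu : 0 < u) (hv : 0 < v)
    (huv : u ≤ k * v) (hvu : v ≤ k * u) : u ^ a ≤ k ^ |a| * v ^ a := by
  have hk0 : 0 < k := one_pos.trans_le hk
  rcases le_or_gt 0 a with ha | ha
  · calc u ^ a ≤ (k * v) ^ a := rpow_le_rpow hu.le huv ha
      _ = k ^ |a| * v ^ a := by rw [mul_rpow hk0.le hv.le, abs_of_nonneg ha]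
  · calc u ^ a ≤ (v / k) ^ a :=
          rpow_le_rpow_of_nonpos (by positivity) ((div_le_iff₀' hk0).2 hvu) ha.le
      _ = k ^ |a| * v ^ a := by
          rw [div_rpow hv.le hk0.le, abs_of_neg ha, rpow_neg hk0.le]; ring

lemma integrableOn_rpow_Ioo_inter_Ioi {a : ℝ} (ha : -1 < a) (b c : ℝ) :
    IntegrableOn (fun u : ℝ => u ^ a) (Ioo b c ∩ Ioi 0) := by
  rcases le_or_gt c b with hcb | hbc
  · simp [Ioo_eq_empty (not_lt.2 hcb)]
  · exact ((intervalIntegrable_iff_integrableOn_Ioo_of_le hbc.le).1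
      (intervalIntegral.intervalIntegrable_rpow' ha)).mono_set inter_subset_left

lemma mul_rpow_le_Vplus {l : ℝ} (hl : -1/2 < l) {x s : ℝ} (hx : 0 ≤ x) (hs : 0 < s) :
    s * (x + s) ^ (2 * l) ≤ 2 ^ (1 + |2 * l|) * Vplus l x s := by
  have hb : 0 < x + s := by positivity
  have hsub : Ioo (x + s / 2) (x + s) ⊆ Ioo (x - s) (x + s) ∩ Ioi 0 :=
    fun u hu => ⟨⟨by linarith [hu.1], hu.2⟩, show 0 < u by linarith [hu.1]⟩
  have hpoint :
      ∀ u ∈ Ioo (x + s / 2) (x + s), (x + s) ^ (2 * l) ≤ 2 ^ |2 * l| * u ^ (2 * l) :=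
    fun u hu => rpow_le_rpow_abs_mul_rpow _ one_le_two hb (by linarith [hu.1])
      (by linarith [hu.1]) (by linarith [hu.2])
  have hint := integrableOn_rpow_Ioo_inter_Ioi (a := 2 * l) (by linarith) (x - s) (x + s)
  have hsmall := setIntegral_ge_of_const_le_real measurableSet_Ioo measure_Ioo_lt_top.ne hpoint
    ((hint.mono_set hsub).const_mul _)
  rw [integral_const_mul, Real.volume_real_Ioo_of_le (by linarith)] at hsmall
  have hmono : ∫ u in Ioo (x + s / 2) (x + s), u ^ (2 * l) ≤ Vplus l x s :=
    setIntegral_mono_set hint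
      (ae_restrict_of_forall_mem (measurableSet_Ioo.inter measurableSet_Ioi)
        fun u hu => rpow_nonneg (le_of_lt hu.2) _) hsub.eventuallyLE
  rw [rpow_add two_pos, rpow_one]
  nlinarith [rpow_pos_of_pos two_pos |2 * l|]

lemma setIntegral_Ioo_zero_rpow {a : ℝ} (ha : -1 < a) {b : ℝ} (hb : 0 ≤ b) :
    ∫ u in Ioo 0 b, u ^ a = b ^ (a + 1) / (a + 1) := by
  rw [← integral_Ioc_eq_integral_Ioo, ← intervalIntegral.integral_of_le hb,
    integral_rpow (Or.inl ha), zero_rpow (by linarith), sub_zero]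

lemma Vplus_le_mul_rpow {l : ℝ} (hl : -1/2 < l) {x s : ℝ} (hx : 0 ≤ x) (hs : 0 < s) :
    Vplus l x s ≤ (4 / (2 * l + 1) + 2 ^ (1 + |2 * l|)) * (s * (x + s) ^ (2 * l)) := by
  have ha : -1 < 2 * l := by linarith
  have hb : 0 < x + s := by positivity
  rcases le_or_gt x (3 * s) with hx3 | hx3
  · have hsub : Ioo (x - s) (x + s) ∩ Ioi 0 ⊆ Ioo 0 (x + s) := fun u hu => ⟨hu.2, hu.1.2⟩
    calc Vplus l x s ≤ ∫ u in Ioo 0 (x + s), u ^ (2 * l) :=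
          setIntegral_mono_set ((intervalIntegral.integrableOn_Ioo_rpow_iff hb).2 ha)
            (ae_restrict_of_forall_mem measurableSet_Ioo fun u hu => rpow_nonneg hu.1.le _)
            hsub.eventuallyLE
      _ = (x + s) * (x + s) ^ (2 * l) / (2 * l + 1) := by
          rw [setIntegral_Ioo_zero_rpow ha hb.le, rpow_add_one hb.ne', mul_comm]
      _ ≤ 4 / (2 * l + 1) * (s * (x + s) ^ (2 * l)) := by
          rw [div_mul_eq_mul_div, div_le_div_iff_of_pos_right (by linarith)]
          nlinarith [rpow_nonneg hb.le (2 * l)]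
      _ ≤ _ := by gcongr; exact le_add_of_nonneg_right (by positivity)
  · have hwin : Ioo (x - s) (x + s) ∩ Ioi 0 = Ioo (x - s) (x + s) :=
      inter_eq_left.2 fun u hu => show 0 < u by linarith [hu.1]
    have hpoint :
        ∀ u ∈ Ioo (x - s) (x + s), ‖u ^ (2 * l)‖ ≤ 2 ^ |2 * l| * (x + s) ^ (2 * l) := by
      intro u hu
      have hu0 : 0 < u := by linarith [hu.1]
      rw [Real.norm_of_nonneg (rpow_nonneg hu0.le _)]
      exact rpow_le_rpow_abs_mul_rpow _ one_le_two hu0 hb (by linarith [hu.2])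
        (by linarith [hu.1])
    calc Vplus l x s ≤ ‖Vplus l x s‖ := le_norm_self _
      _ ≤ 2 ^ |2 * l| * (x + s) ^ (2 * l) * volume.real (Ioo (x - s) (x + s)) := by
          rw [Vplus, hwin]; exact norm_setIntegral_le_of_norm_le_const measure_Ioo_lt_top hpoint
      _ = 2 ^ (1 + |2 * l|) * (s * (x + s) ^ (2 * l)) := by
          rw [Real.volume_real_Ioo_of_le (by linarith), rpow_add two_pos, rpow_one]; ring
      _ ≤ _ := by gcongr; exact le_add_of_nonneg_left (div_nonneg (by norm_num) (by linarith))

lemma Vplus_pos {l : ℝ} (hl : -1/2 < l) {x s : ℝ} (hx : 0 ≤ x) (hs : 0 < s) :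
    0 < Vplus l x s :=
  pos_of_mul_pos_right ((by positivity : 0 < s * (x + s) ^ (2 * l)).trans_le
    (mul_rpow_le_Vplus hl hx hs)) (by positivity)

lemma exists_Vplus_le_mul_Vplus_div {l : ℝ} (hl : -1/2 < l) {r : ℝ} (hr : 1 ≤ r) :
    ∃ K, 0 < K ∧ ∀ x s, 0 ≤ x → 0 < s → Vplus l x s ≤ K * Vplus l x (s / r) := by
  have hr0 : 0 < r := one_pos.trans_le hr
  set C := 4 / (2 * l + 1) + 2 ^ (1 + |2 * l|)
  have hC : 0 < C := add_pos (div_pos (by norm_num) (by linarith)) (by positivity)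
  refine ⟨C * r ^ (1 + |2 * l|) * 2 ^ (1 + |2 * l|), by positivity, fun x s hx hs => ?_⟩
  have hcomp : (x + s) ^ (2 * l) ≤ r ^ |2 * l| * (x + s / r) ^ (2 * l) := by
    have hsr : s / r ≤ s := div_le_self hs.le hr
    refine rpow_le_rpow_abs_mul_rpow _ hr (by positivity) (by positivity) ?_ (by nlinarith)
    rw [mul_add, mul_div_cancel₀ s hr0.ne']
    nlinarith
  calc Vplus l x s ≤ C * (s * (x + s) ^ (2 * l)) := Vplus_le_mul_rpow hl hx hs
    _ ≤ C * (s * (r ^ |2 * l| * (x + s / r) ^ (2 * l))) := by gcongr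
    _ = C * r ^ (1 + |2 * l|) * (s / r * (x + s / r) ^ (2 * l)) := by
        rw [rpow_add hr0, rpow_one]; field_simp
    _ ≤ C * r ^ (1 + |2 * l|) * (2 ^ (1 + |2 * l|) * Vplus l x (s / r)) :=
        mul_le_mul_of_nonneg_left (mul_rpow_le_Vplus hl hx (div_pos hs hr0)) (by positivity)
    _ = _ := by ring

noncomputable def wplus (l : ℝ) : ℝ → ℝ := (Ioi 0).indicator (· ^ (2 * l))

lemma Vplus_eq_setIntegral_wplus (l x s : ℝ) :
    Vplus l x s = ∫ v in Ioo (x - s) (x + s), wplus l v := by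
  rw [Vplus, wplus, setIntegral_indicator measurableSet_Ioi]

lemma setIntegral_wplus_add (l x : ℝ) {s : ℝ} (hs : 0 ≤ s) :
    ∫ u in Ioo (-s) s, wplus l (x + u) = Vplus l x s := by
  rw [Vplus_eq_setIntegral_wplus, ← integral_Ioc_eq_integral_Ioo,
    ← integral_Ioc_eq_integral_Ioo, ← intervalIntegral.integral_of_le (by linarith),
    ← intervalIntegral.integral_of_le (by linarith), intervalIntegral.integral_comp_add_left,
    sub_eq_add_neg]

lemma intervalIntegrable_wplus {l : ℝ} (hl : -1/2 < l) (a b : ℝ) :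
    IntervalIntegrable (wplus l) volume a b := by
  rw [intervalIntegrable_iff]
  exact (intervalIntegrable_iff.1 (intervalIntegral.intervalIntegrable_rpow' (by linarith))
    ).indicator measurableSet_Ioi

lemma integrableOn_wplus_add {l : ℝ} (hl : -1/2 < l) (x : ℝ) {s : ℝ} (hs : 0 ≤ s) :
    IntegrableOn (fun u => wplus l (x + u)) (Ioo (-s) s) := by
  have h := (intervalIntegrable_wplus hl (x - s) (x + s)).comp_add_left x
  rwa [sub_sub_cancel_left, add_sub_cancel_left,
    intervalIntegrable_iff_integrableOn_Ioo_of_le (by linarith)] at h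

def openCube (ι : Type*) [Fintype ι] (σ : ℝ) : Set (EuclideanSpace ℝ ι) :=
  WithLp.ofLp ⁻¹' univ.pi fun _ => Ioo (-σ) σ

section openCube

variable {ι : Type*} [Fintype ι]

lemma setIntegral_openCube_prod (f : ι → ℝ → ℝ) (σ : ℝ) :
    ∫ z in openCube ι σ, ∏ j, f j (z j) = ∏ j, ∫ u in Ioo (-σ) σ, f j u := by
  rw [openCube, (PiLp.volume_preserving_ofLp ι).setIntegral_preimage_emb
    (MeasurableEquiv.toLp 2 (ι → ℝ)).symm.measurableEmbedding (fun y => ∏ j, f j (y j)),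
    volume_pi, Measure.restrict_pi_pi, integral_fintype_prod_eq_prod]

lemma integrableOn_openCube_prod {f : ι → ℝ → ℝ} {σ : ℝ}
    (hf : ∀ j, IntegrableOn (f j) (Ioo (-σ) σ)) :
    IntegrableOn (fun z : EuclideanSpace ℝ ι => ∏ j, f j (z j)) (openCube ι σ) := by
  refine ((PiLp.volume_preserving_ofLp ι).integrableOn_comp_preimage
    (MeasurableEquiv.toLp 2 (ι → ℝ)).symm.measurableEmbedding
    (f := fun y => ∏ j, f j (y j))).2 ?_
  rw [IntegrableOn, volume_pi, Measure.restrict_pi_pi]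
  exact Integrable.fintype_prod hf

lemma ball_zero_subset_openCube (σ : ℝ) :
    Metric.ball (0 : EuclideanSpace ℝ ι) σ ⊆ openCube ι σ := fun z hz j _ =>
  abs_lt.1 ((PiLp.norm_apply_le z j).trans_lt (mem_ball_zero_iff.1 hz))

lemma openCube_subset_ball_zero {σ : ℝ} (hσ : 0 < σ) :
    openCube ι (σ / √(Fintype.card ι + 1)) ⊆ Metric.ball (0 : EuclideanSpace ℝ ι) σ := by
  intro z hz
  have hN : (0 : ℝ) < Fintype.card ι + 1 := by positivity
  rw [mem_ball_zero_iff, ← sq_lt_sq₀ (norm_nonneg _) hσ.le, EuclideanSpace.norm_sq_eq]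
  calc ∑ j, ‖z j‖ ^ 2 ≤ ∑ _j : ι, (σ / √(Fintype.card ι + 1)) ^ 2 :=
        Finset.sum_le_sum fun j _ => by
          rw [Real.norm_eq_abs, sq_le_sq₀ (abs_nonneg _) (by positivity)]
          exact (abs_lt.2 (hz j (mem_univ j))).le
    _ = Fintype.card ι / (Fintype.card ι + 1) * σ ^ 2 := by
        rw [Finset.sum_const, Finset.card_univ, nsmul_eq_mul, div_pow, sq_sqrt hN.le]; ring
    _ < σ ^ 2 := by
        rw [div_mul_eq_mul_div, div_lt_iff₀ hN]; nlinarith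

variable {f : ι → ℝ → ℝ}

lemma setIntegral_ball_prod_le {σ : ℝ} (hf₀ : ∀ j u, 0 ≤ f j u)
    (hf : ∀ j, IntegrableOn (f j) (Ioo (-σ) σ)) :
    ∫ z in Metric.ball (0 : EuclideanSpace ℝ ι) σ, ∏ j, f j (z j) ≤
      ∏ j, ∫ u in Ioo (-σ) σ, f j u := by
  rw [← setIntegral_openCube_prod]
  exact setIntegral_mono_set (integrableOn_openCube_prod hf)
    (ae_of_all _ fun z => Finset.prod_nonneg fun j _ => hf₀ j _)
    (ball_zero_subset_openCube σ).eventuallyLE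

lemma prod_setIntegral_le_setIntegral_ball {σ : ℝ} (hσ : 0 < σ) (hf₀ : ∀ j u, 0 ≤ f j u)
    (hf : ∀ j, IntegrableOn (f j) (Ioo (-σ) σ)) :
    ∏ j, ∫ u in Ioo (-(σ / √(Fintype.card ι + 1))) (σ / √(Fintype.card ι + 1)),
      f j u ≤
      ∫ z in Metric.ball (0 : EuclideanSpace ℝ ι) σ, ∏ j, f j (z j) := by
  rw [← setIntegral_openCube_prod]
  exact setIntegral_mono_set
    ((integrableOn_openCube_prod hf).mono_set (ball_zero_subset_openCube σ))
    (ae_of_all _ fun z => Finset.prod_nonneg fun j _ => hf₀ j _)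
    (openCube_subset_ball_zero hσ).eventuallyLE

end openCube

lemma wplus_nonneg (l v : ℝ) : 0 ≤ wplus l v :=
  indicator_nonneg (fun _ hv => rpow_nonneg (le_of_lt hv) _) v

lemma indicator_Xi_eq_prod {n : ℕ} (l : Fin n → ℝ) (x z : EuclideanSpace ℝ (Fin n))
    (t : ℝ) :
    {z : EuclideanSpace ℝ (Fin n) | ∀ j, 0 < x j + z j}.indicator (fun z => Xi l x z t) z =
      ∏ j, wplus (l j) (x j + z j) / Vplus (l j) (x j) (√t) := by
  by_cases h : ∀ j, 0 < x j + z j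
  · simp only [indicator_apply, mem_ofPred_eq, if_pos h]
    exact Finset.prod_congr rfl fun j _ => by rw [wplus, indicator_of_mem (mem_Ioi.2 (h j))]
  · simp only [indicator_apply, mem_ofPred_eq, if_neg h]
    obtain ⟨j, hj⟩ := not_forall.1 h
    refine (Finset.prod_eq_zero (Finset.mem_univ j) ?_).symm
    rw [wplus, indicator_of_notMem (show x j + z j ∉ Ioi 0 from hj), zero_div]

theorem stmt6 {n : ℕ} (l : Fin n → ℝ) (hl : ∀ j, -1/2 < l j) :
    ∃ c C : ℝ, 0 < c ∧ 0 < C ∧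
      ∀ (x : EuclideanSpace ℝ (Fin n)) (t : ℝ), (∀ j, 0 < x j) → 0 < t →
        c ≤ (∫ z in Metric.ball (0 : EuclideanSpace ℝ (Fin n)) (Real.sqrt t),
              Set.indicator {z : EuclideanSpace ℝ (Fin n) | ∀ j, 0 < x j + z j}
                (fun z => Xi l x z t) z) ∧
        (∫ z in Metric.ball (0 : EuclideanSpace ℝ (Fin n)) (Real.sqrt t),
              Set.indicator {z : EuclideanSpace ℝ (Fin n) | ∀ j, 0 < x j + z j}
                (fun z => Xi l x z t) z) ≤ C := by
  have hr : (1 : ℝ) ≤ √(Fintype.card (Fin n) + 1) :=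
    one_le_sqrt.2 (le_add_of_nonneg_left (Nat.cast_nonneg _))
  choose K hK hVK using fun j => exists_Vplus_le_mul_Vplus_div (hl j) hr
  refine ⟨∏ j, (K j)⁻¹, 1, Finset.prod_pos fun j _ => inv_pos.2 (hK j), one_pos,
    fun x t hx ht => ?_⟩
  have hs : 0 < √t := sqrt_pos.2 ht
  have hV : ∀ j, 0 < Vplus (l j) (x j) (√t) := fun j => Vplus_pos (hl j) (hx j).le hs
  set f : Fin n → ℝ → ℝ := fun j u => wplus (l j) (x j + u) / Vplus (l j) (x j) (√t)
  have hf₀ : ∀ j u, 0 ≤ f j u := fun j u => div_nonneg (wplus_nonneg _ _) (hV j).le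
  have hf : ∀ j, IntegrableOn (f j) (Ioo (-√t) (√t)) := fun j =>
    (integrableOn_wplus_add (hl j) (x j) hs.le).div_const _
  have hf_integral : ∀ σ, 0 ≤ σ → ∀ j,
      ∫ u in Ioo (-σ) σ, f j u = Vplus (l j) (x j) σ / Vplus (l j) (x j) (√t) := by
    intro σ hσ j
    rw [integral_div, setIntegral_wplus_add _ _ hσ]
  simp_rw [indicator_Xi_eq_prod]
  constructor
  · refine le_trans (Finset.prod_le_prod (fun j _ => (inv_pos.2 (hK j)).le) fun j _ => ?_)
      (prod_setIntegral_le_setIntegral_ball hs hf₀ hf)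
    rw [hf_integral _ (by positivity), inv_eq_one_div, div_le_div_iff₀ (hK j) (hV j), one_mul,
      mul_comm]
    exact hVK j _ _ (hx j).le hs
  · refine (setIntegral_ball_prod_le hf₀ hf).trans_eq ?_
    simp_rw [hf_integral _ hs.le, div_self (hV _).ne', Finset.prod_const_one]
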